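/- Let x₀, x₁ ∈ ℝ with x₀ ≠ x₁, and let y₀, y₁ ≥ 0 be not both zero. Let δ* be the unique solution in (−2π, 2π) of f(δ, y₀², y₁²) = x₁ − x₀, and set R₁ = π·(|x₁ − x₀| − 2y₁y₀) and R₂ = (δ*)²·(y₁² + y₀² − 2y₁y₀·cos(δ*/2)) / (2·sin²(δ*/2)). Then R₁ ≤ R₂. Moreover, if (1/2)·[π·(y₁² + y₀²) + 4y₁y₀] < |x₁ − x₀|, then R₁ < R₂. -/

import Mathlib

/-- The function `f(δ, v₀, v₁)` appearing in the δ-equation: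
`f(δ) = [(v₁+v₀)(δ − sin δ) − 2√(v₁v₀)(δ·cos(δ/2) − 2·sin(δ/2))] / (2·sin²(δ/2))`
for `δ ≠ 0`, and `f(0) = 0`. -/
noncomputable def fdelta (δ v0 v1 : ℝ) : ℝ :=
  if δ = 0 then 0 else
    ((v1 + v0) * (δ - Real.sin δ) -
      2 * Real.sqrt (v1 * v0) * (δ * Real.cos (δ / 2) - 2 * Real.sin (δ / 2))) /
    (2 * Real.sin (δ / 2) ^ 2)

/-!
For `0 < δ < 2π` write `s = sin (δ/2)` and `c = cos (δ/2)`. Since `s² = (1 - c)(1 + c)`,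
`2s²·(R₂ - R₁)` splits as
`(y₁ - y₀)²·(δ(δ - π) + π sin δ) + 4y₁y₀(1 - c)·(δ(δ - π)/2 + π(1 + c - s))`.
Both coefficients are nonnegative and vanish only at `δ = π`, which follows from
`x - x³/6 ≤ sin x` (for the second one after substituting `δ = π + 2w`). At `δ = π`, `f`
equals the threshold `(π(y₁² + y₀²) + 4y₁y₀)/2` exactly, so beyond it `δ ≠ π` and the
inequality is strict. Negative `δ` reduce to positive ones because `f` is odd in `δ` and `R₂` is
even.
-/

open Real Set

noncomputable def rTwo (δ y0 y1 : ℝ) : ℝ :=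
  δ ^ 2 * (y1 ^ 2 + y0 ^ 2 - 2 * y1 * y0 * cos (δ / 2)) / (2 * sin (δ / 2) ^ 2)

lemma rTwo_neg (δ y0 y1 : ℝ) : rTwo (-δ) y0 y1 = rTwo δ y0 y1 := by
  simp only [rTwo, neg_div, cos_neg, sin_neg, neg_sq]

lemma fdelta_neg (δ v0 v1 : ℝ) : fdelta (-δ) v0 v1 = -fdelta δ v0 v1 := by
  unfold fdelta
  rcases eq_or_ne δ 0 with rfl | hδ
  · simp
  · rw [if_neg (neg_ne_zero.2 hδ), if_neg hδ, neg_div, sin_neg, cos_neg, sin_neg]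
    ring

lemma fdelta_sq_sq {δ y0 y1 : ℝ} (hy0 : 0 ≤ y0) (hy1 : 0 ≤ y1) (hδ : δ ≠ 0) :
    fdelta δ (y0 ^ 2) (y1 ^ 2) =
      ((y1 - y0) ^ 2 * (δ - sin δ) +
          2 * y1 * y0 * (1 - cos (δ / 2)) * (δ + 2 * sin (δ / 2))) /
        (2 * sin (δ / 2) ^ 2) := by
  have hsin : sin δ = 2 * sin (δ / 2) * cos (δ / 2) := by
    rw [← sin_two_mul, mul_div_cancel₀ δ two_ne_zero]
  rw [fdelta, if_neg hδ, ← mul_pow, sqrt_sq (mul_nonneg hy1 hy0), hsin]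
  ring

lemma fdelta_sq_sq_nonneg {δ y0 y1 : ℝ} (hy0 : 0 ≤ y0) (hy1 : 0 ≤ y1) (hδ : 0 < δ) :
    0 ≤ fdelta δ (y0 ^ 2) (y1 ^ 2) := by
  rw [fdelta_sq_sq hy0 hy1 hδ.ne']
  have hsin : sin δ ≤ δ := sin_le hδ.le
  have hcos : cos (δ / 2) ≤ 1 := cos_le_one _
  have hsin_half : -(δ / 2) ≤ sin (δ / 2) :=
    (abs_le.1 (abs_sin_le_abs.trans_eq (abs_of_pos (half_pos hδ)))).1
  refine div_nonneg (add_nonneg ?_ ?_) (by positivity)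
  · exact mul_nonneg (sq_nonneg _) (by linarith)
  · exact mul_nonneg (mul_nonneg (by positivity) (by linarith)) (by linarith)

lemma fdelta_pi_sq_sq {y0 y1 : ℝ} (hy0 : 0 ≤ y0) (hy1 : 0 ≤ y1) :
    fdelta π (y0 ^ 2) (y1 ^ 2) = 1 / 2 * (π * (y1 ^ 2 + y0 ^ 2) + 4 * y1 * y0) := by
  rw [fdelta_sq_sq hy0 hy1 pi_ne_zero, sin_pi, cos_pi_div_two, sin_pi_div_two]
  ring

lemma mul_sub_pi_add_pi_mul_sin_pos {δ : ℝ} (h0 : 0 < δ) (hπ : δ ≠ π) :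
    0 < δ * (δ - π) + π * sin δ := by
  have hπ_lt := pi_lt_d2
  have hπ_pos := pi_pos
  have small : ∀ t, 0 < t → t ≤ π / 2 → 0 < t * (t - π) + π * sin t := by
    intro t ht0 ht
    have hcube := sin_gt_sub_cube ht0
    have hfactor : 0 < 1 - π * t / 6 := by nlinarith
    nlinarith [mul_pos (pow_pos ht0 2) hfactor]
  rcases hπ.lt_or_gt with hlt | hgt
  · rcases le_or_gt δ (π / 2) with hle | hgt'
    · exact small δ h0 hle
    · -- `δ * (δ - π) + π * sin δ` is symmetric about `π / 2`
      have h := small (π - δ) (by linarith) (by linarith)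
      rw [sin_pi_sub] at h
      linarith
  · have h := sin_lt (sub_pos.2 hgt)
    rw [sin_sub_pi] at h
    nlinarith

lemma mul_sub_pi_add_pi_mul_sin_nonneg {δ : ℝ} (h0 : 0 < δ) :
    0 ≤ δ * (δ - π) + π * sin δ := by
  rcases eq_or_ne δ π with rfl | hπ
  · simp
  · exact (mul_sub_pi_add_pi_mul_sin_pos h0 hπ).le

lemma two_mul_sq_add_pi_mul_sub_sin_add_pi_mul_one_sub_cos_pos {w : ℝ} (hw : -π < w)
    (hw0 : w ≠ 0) : 0 < 2 * w ^ 2 + π * (w - sin w) + π * (1 - cos w) := by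
  have hcos : 0 ≤ π * (1 - cos w) := mul_nonneg pi_pos.le (sub_nonneg.2 (cos_le_one w))
  rcases hw0.lt_or_gt with hneg | hpos
  · have hcube : w ^ 3 / 6 ≤ w - sin w := by
      have h := sin_ge_sub_cube (neg_nonneg.2 hneg.le)
      rw [sin_neg] at h
      linarith
    have hfactor : 0 < 2 + π * w / 6 := by
      nlinarith [pi_lt_d2, mul_pos pi_pos (by linarith : 0 < w + π)]
    nlinarith [mul_pos (pow_pos (neg_pos.2 hneg) 2) hfactor, pi_pos]
  · nlinarith [sin_lt hpos, pi_pos]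

lemma mul_sub_pi_div_two_add_pi_mul_pos {δ : ℝ} (h0 : -π < δ) (hπ : δ ≠ π) :
    0 < δ * (δ - π) / 2 + π * (1 + cos (δ / 2) - sin (δ / 2)) := by
  have h := two_mul_sq_add_pi_mul_sub_sin_add_pi_mul_one_sub_cos_pos (w := (δ - π) / 2)
    (by linarith) (div_ne_zero (sub_ne_zero.2 hπ) two_ne_zero)
  have hδ : δ / 2 = (δ - π) / 2 + π / 2 := by ring
  rw [hδ, cos_add_pi_div_two, sin_add_pi_div_two]
  linarith

lemma mul_sub_pi_div_two_add_pi_mul_nonneg {δ : ℝ} (h0 : -π < δ) :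
    0 ≤ δ * (δ - π) / 2 + π * (1 + cos (δ / 2) - sin (δ / 2)) := by
  rcases eq_or_ne δ π with rfl | hπ
  · simp
  · exact (mul_sub_pi_div_two_add_pi_mul_pos h0 hπ).le

lemma rTwo_sub_pi_mul_fdelta_sub {δ y0 y1 : ℝ} (hy0 : 0 ≤ y0) (hy1 : 0 ≤ y1)
    (hs : sin (δ / 2) ≠ 0) :
    rTwo δ y0 y1 - π * (fdelta δ (y0 ^ 2) (y1 ^ 2) - 2 * y1 * y0) =
      ((y1 - y0) ^ 2 * (δ * (δ - π) + π * sin δ) +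
          4 * y1 * y0 *
            ((1 - cos (δ / 2)) * (δ * (δ - π) / 2 + π * (1 + cos (δ / 2) - sin (δ / 2))))) /
        (2 * sin (δ / 2) ^ 2) := by
  have hδ : δ ≠ 0 := by
    rintro rfl
    simp at hs
  rw [rTwo, fdelta_sq_sq hy0 hy1 hδ]
  field_simp
  linear_combination (8 * π * y1 * y0) * sin_sq_add_cos_sq (δ / 2)

lemma pi_mul_fdelta_sub_le_rTwo {δ y0 y1 : ℝ} (hy0 : 0 ≤ y0) (hy1 : 0 ≤ y1) (h0 : 0 < δ)
    (h2 : δ < 2 * π) :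
    π * (fdelta δ (y0 ^ 2) (y1 ^ 2) - 2 * y1 * y0) ≤ rTwo δ y0 y1 := by
  have hs : 0 < sin (δ / 2) := sin_pos_of_pos_of_lt_pi (by linarith) (by linarith)
  rw [← sub_nonneg, rTwo_sub_pi_mul_fdelta_sub hy0 hy1 hs.ne']
  have hA := mul_sub_pi_add_pi_mul_sin_nonneg h0
  have hK := mul_sub_pi_div_two_add_pi_mul_nonneg (by linarith [pi_pos] : -π < δ)
  have hc : 0 ≤ 1 - cos (δ / 2) := sub_nonneg.2 (cos_le_one _)
  exact div_nonneg (add_nonneg (mul_nonneg (sq_nonneg _) hA)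
    (mul_nonneg (by positivity) (mul_nonneg hc hK))) (by positivity)

lemma pi_mul_fdelta_sub_lt_rTwo {δ y0 y1 : ℝ} (hy0 : 0 ≤ y0) (hy1 : 0 ≤ y1)
    (hy : ¬(y0 = 0 ∧ y1 = 0)) (h0 : 0 < δ) (h2 : δ < 2 * π)
    (hfar : 1 / 2 * (π * (y1 ^ 2 + y0 ^ 2) + 4 * y1 * y0) < fdelta δ (y0 ^ 2) (y1 ^ 2)) :
    π * (fdelta δ (y0 ^ 2) (y1 ^ 2) - 2 * y1 * y0) < rTwo δ y0 y1 := by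
  have hπ : δ ≠ π := by
    rintro rfl
    rw [fdelta_pi_sq_sq hy0 hy1] at hfar
    exact lt_irrefl _ hfar
  have hs : 0 < sin (δ / 2) := sin_pos_of_pos_of_lt_pi (by linarith) (by linarith)
  rw [← sub_pos, rTwo_sub_pi_mul_fdelta_sub hy0 hy1 hs.ne']
  set p := δ * (δ - π) + π * sin δ
  set q := (1 - cos (δ / 2)) * (δ * (δ - π) / 2 + π * (1 + cos (δ / 2) - sin (δ / 2)))
  have hp : 0 < p := mul_sub_pi_add_pi_mul_sin_pos h0 hπ
  have hq : 0 < q := by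
    have hc : cos (δ / 2) < 1 := by nlinarith [sin_sq_add_cos_sq (δ / 2), cos_le_one (δ / 2)]
    exact mul_pos (sub_pos.2 hc) (mul_sub_pi_div_two_add_pi_mul_pos (by linarith [pi_pos]) hπ)
  have hsum : 0 < y1 + y0 := by
    by_contra! h
    exact hy ⟨by linarith, by linarith⟩
  -- both coefficients dominate `min p q`, and `(y₁ - y₀)² + 4y₁y₀ = (y₁ + y₀)²`
  have hmin : 0 < min p q * (y1 + y0) ^ 2 := mul_pos (lt_min hp hq) (pow_pos hsum 2)
  have hle : min p q * (y1 + y0) ^ 2 ≤ (y1 - y0) ^ 2 * p + 4 * y1 * y0 * q := by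
    have hyy : 0 ≤ 4 * y1 * y0 := by positivity
    nlinarith [mul_le_mul_of_nonneg_left (min_le_left p q) (sq_nonneg (y1 - y0)),
      mul_le_mul_of_nonneg_left (min_le_right p q) hyy]
  refine div_pos ?_ (by positivity)
  linarith

lemma pi_mul_abs_fdelta_sub_le_rTwo {δ y0 y1 : ℝ} (hy0 : 0 ≤ y0) (hy1 : 0 ≤ y1)
    (hy : ¬(y0 = 0 ∧ y1 = 0)) (hδ : δ ∈ Ioo (-(2 * π)) (2 * π)) (hδ0 : δ ≠ 0) :
    π * (|fdelta δ (y0 ^ 2) (y1 ^ 2)| - 2 * y1 * y0) ≤ rTwo δ y0 y1 ∧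
      (1 / 2 * (π * (y1 ^ 2 + y0 ^ 2) + 4 * y1 * y0) < |fdelta δ (y0 ^ 2) (y1 ^ 2)| →
        π * (|fdelta δ (y0 ^ 2) (y1 ^ 2)| - 2 * y1 * y0) < rTwo δ y0 y1) := by
  wlog hpos : 0 < δ generalizing δ
  · have h := this (δ := -δ) ⟨by linarith [hδ.2], by linarith [hδ.1]⟩ (neg_ne_zero.2 hδ0)
      (by linarith [lt_of_le_of_ne (not_lt.1 hpos) hδ0])
    simpa only [fdelta_neg, abs_neg, rTwo_neg] using h
  rw [abs_of_nonneg (fdelta_sq_sq_nonneg hy0 hy1 hpos)]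
  exact ⟨pi_mul_fdelta_sub_le_rTwo hy0 hy1 hpos hδ.2, pi_mul_fdelta_sub_lt_rTwo hy0 hy1 hy hpos hδ.2⟩

/-- Lemma: with `δ*` the unique solution in `(−2π, 2π)` of `f(δ, y₀², y₁²) = x₁ − x₀`,
`R₁ = π(|x₁ − x₀| − 2y₁y₀)` and `R₂ = (δ*)²(y₁² + y₀² − 2y₁y₀cos(δ*/2))/(2sin²(δ*/2))`
satisfy `R₁ ≤ R₂`, with strict inequality in the far regime. -/
theorem R1_le_R2 (x0 x1 y0 y1 δ : ℝ) (hx : x0 ≠ x1) (hy0 : 0 ≤ y0) (hy1 : 0 ≤ y1)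
    (hy : ¬(y0 = 0 ∧ y1 = 0))
    (hδ : δ ∈ Set.Ioo (-(2 * Real.pi)) (2 * Real.pi))
    (hsol : fdelta δ (y0 ^ 2) (y1 ^ 2) = x1 - x0) :
    Real.pi * (|x1 - x0| - 2 * y1 * y0) ≤
      δ ^ 2 * (y1 ^ 2 + y0 ^ 2 - 2 * y1 * y0 * Real.cos (δ / 2)) /
        (2 * Real.sin (δ / 2) ^ 2) ∧
    (1 / 2 * (Real.pi * (y1 ^ 2 + y0 ^ 2) + 4 * y1 * y0) < |x1 - x0| →
      Real.pi * (|x1 - x0| - 2 * y1 * y0) <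
        δ ^ 2 * (y1 ^ 2 + y0 ^ 2 - 2 * y1 * y0 * Real.cos (δ / 2)) /
          (2 * Real.sin (δ / 2) ^ 2)) := by
  have hδ0 : δ ≠ 0 := by
    rintro rfl
    rw [fdelta, if_pos rfl, eq_comm, sub_eq_zero] at hsol
    exact hx hsol.symm
  rw [← hsol]
  exact pi_mul_abs_fdelta_sub_le_rTwo hy0 hy1 hy hδ hδ0
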